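/- arXiv:2604.24460 — 2 statements merged into one kernel-verified Lean document; each statement's English description precedes it below -/
import Mathlib

section
/- Let ρ = Σ_{k,l=0}^{d−1} c_{k,l} P_{k,l} ∈ M_d be a Bell-diagonal state. Then its partial transpose is block-diagonalized by the Bell unitary U: ρ^Γ = U^† (Σ_{m=0}^{d−1} |m⟩⟨m| ⊗ B_m) U, where B_m = (1/d) Σ_{k,l,y=0}^{d−1} ω^{y(k−m)} c_{k,l} |l−y⟩⟨l+y| with all indices taken modulo d. -/
open Matrix BigOperators Complex Kronecker
open scoped ComplexOrder

/-- `ω = exp(2πi/d)`. -/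
noncomputable def omg (d : ℕ) : ℂ := Complex.exp (2 * Real.pi * Complex.I / (d : ℂ))

/-- `ω^x` for `x : ZMod d`. -/
noncomputable def wpow (d : ℕ) [NeZero d] (x : ZMod d) : ℂ := omg d ^ x.val

/-- Weyl-Heisenberg operator `W_{k,l} = Σ_j ω^{jk} |j⟩⟨j+l|`. -/
noncomputable def Weyl (d : ℕ) [NeZero d] (k l : ZMod d) : Matrix (ZMod d) (ZMod d) ℂ :=
  Matrix.of fun i j => if j = i + l then wpow d (i * k) else 0

/-- Bell basis vector `|Ω_{k,l}⟩ = (W_{k,l} ⊗ 1)|Ω_{0,0}⟩`, whose `(i,j)` entry is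
`(1/√d) (W_{k,l})_{i,j}`. -/
noncomputable def OmegaVec (d : ℕ) [NeZero d] (k l : ZMod d) : ZMod d × ZMod d → ℂ :=
  fun p => ((1 / Real.sqrt d : ℝ) : ℂ) * Weyl d k l p.1 p.2

/-- Bell projector `P_{k,l} = |Ω_{k,l}⟩⟨Ω_{k,l}|`. -/
noncomputable def BellProj (d : ℕ) [NeZero d] (k l : ZMod d) :
    Matrix (ZMod d × ZMod d) (ZMod d × ZMod d) ℂ :=
  Matrix.of fun p q => OmegaVec d k l p * (starRingEnd ℂ) (OmegaVec d k l q)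

/-- Partial transpose on the second tensor factor:
`(ρ^Γ)_{(i,j),(k,l)} = ρ_{(i,l),(k,j)}`. -/
def PT {d : ℕ} (ρ : Matrix (ZMod d × ZMod d) (ZMod d × ZMod d) ℂ) :
    Matrix (ZMod d × ZMod d) (ZMod d × ZMod d) ℂ :=
  Matrix.of fun p q => ρ (p.1, q.2) (q.1, p.2)

/-- Bell unitary `U = Σ_{r,s} |r,s⟩⟨Ω_{r,s}|`. -/
noncomputable def BellU (d : ℕ) [NeZero d] :
    Matrix (ZMod d × ZMod d) (ZMod d × ZMod d) ℂ :=
  Matrix.of fun p q => (starRingEnd ℂ) (OmegaVec d p.1 p.2 q)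

/-- The block `B_m = (1/d) Σ_{k,l,y} ω^{y(k-m)} c_{k,l} |l-y⟩⟨l+y|`. -/
noncomputable def Bblock (d : ℕ) [NeZero d] (c : ZMod d → ZMod d → ℂ) (m : ZMod d) :
    Matrix (ZMod d) (ZMod d) ℂ :=
  Matrix.of fun a b =>
    (1 / (d : ℂ)) * ∑ k : ZMod d, ∑ l : ZMod d, ∑ y : ZMod d,
      wpow d (y * (k - m)) * c k l * (if a = l - y ∧ b = l + y then 1 else 0)

section auxlems
set_option linter.unusedSectionVars false
variable (d : ℕ) [NeZero d]

lemma omg_prim : IsPrimitiveRoot (omg d) d := Complex.isPrimitiveRoot_exp d (NeZero.ne d)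

lemma omg_ne_zero : omg d ≠ 0 := Complex.exp_ne_zero _

lemma omg_pow_d : omg d ^ d = 1 := (omg_prim d).pow_eq_one

lemma omg_pow_mod (n : ℕ) : omg d ^ (n % d) = omg d ^ n := by
  conv_rhs => rw [← Nat.mod_add_div n d, pow_add, pow_mul, omg_pow_d, one_pow, mul_one]

lemma wpow_add (x y : ZMod d) : wpow d (x + y) = wpow d x * wpow d y := by
  rw [wpow, wpow, wpow, ZMod.val_add, omg_pow_mod, pow_add]

lemma wpow_zero : wpow d (0 : ZMod d) = 1 := by
  rw [wpow, ZMod.val_zero, pow_zero]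

lemma wpow_ne_zero (x : ZMod d) : wpow d x ≠ 0 := pow_ne_zero _ (omg_ne_zero d)

lemma conj_wpow (x : ZMod d) : (starRingEnd ℂ) (wpow d x) = wpow d (-x) := by
  have h1 : wpow d x * wpow d (-x) = 1 := by rw [← wpow_add, add_neg_cancel, wpow_zero]
  have hc : (starRingEnd ℂ) (omg d) = (omg d)⁻¹ := by
    rw [omg, ← Complex.exp_conj, ← Complex.exp_neg]
    congr 1
    simp [map_div₀, Complex.conj_I, map_ofNat]
    ring
  have h2 : wpow d x * (starRingEnd ℂ) (wpow d x) = 1 := by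
    rw [wpow, map_pow, hc, ← mul_pow, mul_inv_cancel₀ (omg_ne_zero d), one_pow]
  exact mul_left_cancel₀ (wpow_ne_zero d x) (h2.trans h1.symm)

lemma wpow_eq_one_iff (x : ZMod d) : wpow d x = 1 ↔ x = 0 := by
  rw [wpow, (omg_prim d).pow_eq_one_iff_dvd]
  constructor
  · intro h
    rcases Nat.eq_zero_or_pos x.val with h0 | h0
    · exact (ZMod.val_eq_zero x).mp h0
    · exact absurd (Nat.le_of_dvd h0 h) (not_le.mpr (ZMod.val_lt x))
  · rintro rfl; simp

lemma wpow_nsmul (n : ℕ) (x : ZMod d) : wpow d (n • x) = wpow d x ^ n := by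
  induction n with
  | zero => simp [wpow_zero]
  | succ n ih => rw [succ_nsmul, wpow_add, ih, pow_succ]

lemma sum_wpow (t : ZMod d) : ∑ m : ZMod d, wpow d (m * t) = if t = 0 then (d : ℂ) else 0 := by
  have key : ∀ m : ZMod d, wpow d (m * t) = wpow d t ^ m.val := by
    intro m
    rw [← wpow_nsmul, nsmul_eq_mul, ZMod.natCast_val, ZMod.cast_id]
  simp_rw [key]
  have hval : ∑ m : ZMod d, wpow d t ^ m.val = ∑ i ∈ Finset.range d, wpow d t ^ i := by
    refine Finset.sum_nbij' (fun m => m.val) (fun i => (i : ZMod d)) ?_ ?_ ?_ ?_ ?_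
    · intro m _; simp [Finset.mem_range, ZMod.val_lt]
    · intro i _; simp
    · intro m _; simp [ZMod.natCast_val, ZMod.cast_id]
    · intro i hi; exact ZMod.val_natCast_of_lt (Finset.mem_range.mp hi)
    · intro m _; rfl
  rw [hval]
  split_ifs with h
  · subst h; simp [wpow_zero, Finset.card_range]
  · have hζ : wpow d t ≠ 1 := fun h1 => h ((wpow_eq_one_iff d t).mp h1)
    rw [geom_sum_eq hζ]
    have : wpow d t ^ d = 1 := by
      rw [wpow, ← pow_mul, mul_comm, pow_mul, omg_pow_d, one_pow]
    rw [this, sub_self, zero_div]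

lemma cond_eq (a b l : ZMod d) : (a = b + l) = (l = a - b) := by
  apply propext; constructor
  · intro h; subst h; ring
  · intro h; subst h; ring

lemma cond_eq2 (a y l : ZMod d) : (a = l - y) = (l = a + y) := by
  apply propext; constructor
  · intro h; subst h; ring
  · intro h; subst h; ring

lemma key_swap (f : ZMod d → ZMod d → ZMod d → ℂ) :
    ∑ x : ZMod d, ∑ k : ZMod d, ∑ y : ZMod d, f x k y
      = ∑ k : ZMod d, ∑ y : ZMod d, ∑ x : ZMod d, f x k y := by
  rw [Finset.sum_comm]
  exact Finset.sum_congr rfl fun k _ => Finset.sum_comm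

lemma collapse_l (t : ZMod d) (f : ZMod d → ZMod d → ℂ) :
    (∑ l : ZMod d, ∑ y : ZMod d, if l = t + y then f l y else 0)
      = ∑ y : ZMod d, f (t + y) y := by
  rw [Finset.sum_comm]
  simp [Finset.sum_ite_eq', Finset.mem_univ]

lemma sum_x (p1 q1 : ZMod d) (a b e : ℂ) (k y : ZMod d) :
    (∑ x : ZMod d, a * wpow d (p1 * x) * (b * (wpow d (y * (k - x)) * e)) *
        (a * wpow d (-(q1 * x))))
      = a * a * b * e * wpow d (y * k) * (if p1 - q1 - y = 0 then (d : ℂ) else 0) := by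
  rw [← sum_wpow d (p1 - q1 - y), Finset.mul_sum]
  refine Finset.sum_congr rfl fun x _ => ?_
  have hw : wpow d (p1 * x) * wpow d (y * (k - x)) * wpow d (-(q1 * x))
      = wpow d (y * k) * wpow d (x * (p1 - q1 - y)) := by
    rw [← wpow_add, ← wpow_add, ← wpow_add]
    congr 1; ring
  linear_combination a * a * b * e * hw

end auxlems

/-- Block-diagonalization of the partial transpose of a Bell-diagonal state:
`ρ^Γ = U^† (Σ_m |m⟩⟨m| ⊗ B_m) U`. -/
theorem stmt4 (d : ℕ) [NeZero d] (hd : 2 ≤ d)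
    (c : ZMod d → ZMod d → ℝ) (hc : ∀ k l, 0 ≤ c k l)
    (hsum : ∑ k : ZMod d, ∑ l : ZMod d, c k l = 1)
    (ρ : Matrix (ZMod d × ZMod d) (ZMod d × ZMod d) ℂ)
    (hρ : ρ = ∑ k : ZMod d, ∑ l : ZMod d, (c k l : ℂ) • BellProj d k l) :
    PT ρ = (BellU d)ᴴ *
      (Matrix.of fun p q =>
        if p.1 = q.1 then Bblock d (fun k l => (c k l : ℂ)) p.1 p.2 q.2 else 0) *
      BellU d := by
  apply Matrix.ext
  rintro ⟨p1, p2⟩ ⟨q1, q2⟩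
  have hcondp : ∀ l : ZMod d, (p2 = p1 + l) = (l = p2 - p1) := fun l => cond_eq d p2 p1 l
  have hcondq : ∀ l : ZMod d, (q2 = q1 + l) = (l = q2 - q1) := fun l => cond_eq d q2 q1 l
  have hcondl : ∀ l y : ZMod d, (p2 - p1 = l - y) = (l = (p2 - p1) + y) :=
    fun l y => cond_eq2 d (p2 - p1) y l
  -- reduce the left-hand side
  simp only [PT, Matrix.of_apply, hρ, Matrix.sum_apply, Matrix.smul_apply, BellProj,
    OmegaVec, Weyl, smul_eq_mul, Matrix.of_apply, _root_.map_mul, Complex.conj_ofReal,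
    apply_ite, map_zero, conj_wpow, cond_eq]
  simp only [mul_ite, ite_mul, mul_zero, zero_mul, Finset.sum_ite_eq', Finset.mem_univ, if_true]
  -- reduce the right-hand side
  simp only [Matrix.mul_apply, Matrix.conjTranspose_apply, BellU, Bblock, Matrix.of_apply,
    OmegaVec, Weyl, Fintype.sum_prod_type, Complex.star_def, Complex.conj_conj, _root_.map_mul,
    Complex.conj_ofReal, apply_ite (starRingEnd ℂ), map_zero, _root_.map_one, conj_wpow, ite_and]
  simp only [hcondp, hcondq, mul_ite, ite_mul, mul_zero, zero_mul, mul_one,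
    Finset.sum_ite_irrel, Finset.sum_const_zero, Finset.sum_ite_eq', Finset.mem_univ, if_true]
  simp only [hcondl, mul_ite, ite_mul, mul_zero, zero_mul, mul_one,
    Finset.sum_ite_irrel, Finset.sum_const_zero, Finset.sum_ite_eq', Finset.mem_univ, if_true]
  simp only [collapse_l d]
  simp only [Finset.mul_sum, Finset.sum_mul, mul_ite, ite_mul, mul_zero, zero_mul, neg_neg]
  rw [key_swap d]
  simp only [Finset.sum_ite_irrel, Finset.sum_const_zero]
  simp only [sum_x d]
  symm
  have step : ∀ k : ZMod d,
      (∑ y : ZMod d, if q2 - q1 = p2 - p1 + y + y then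
          ((1 / Real.sqrt d : ℝ) : ℂ) * ((1 / Real.sqrt d : ℝ) : ℂ) * (1 / (d : ℂ)) *
            ((c k (p2 - p1 + y) : ℝ) : ℂ) * wpow d (y * k) *
            (if p1 - q1 - y = 0 then (d : ℂ) else 0)
        else 0)
      = if p2 - q1 = q2 - p1 then
          ((c k (p2 - q1) : ℝ) : ℂ) * (((1 / Real.sqrt d : ℝ) : ℂ) * wpow d (p1 * k) *
            (((1 / Real.sqrt d : ℝ) : ℂ) * wpow d (-(q1 * k))))
        else 0 := by
    intro k
    refine (Finset.sum_eq_single (p1 - q1) ?_ ?_).trans ?_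
    · intro y _ hy
      split_ifs with h1 h2
      · exact absurd (by linear_combination -h2) hy
      · exact mul_zero _
      · rfl
    · intro h; exact absurd (Finset.mem_univ _) h
    · have harg : p2 - p1 + (p1 - q1) = p2 - q1 := by ring
      rw [harg, sub_self, if_pos rfl]
      have hcond : (q2 - q1 = p2 - q1 + (p1 - q1)) = (p2 - q1 = q2 - p1) := by
        apply propext; constructor <;> intro h <;> linear_combination -h
      simp only [hcond]
      split_ifs with h
      · have hw2 : wpow d ((p1 - q1) * k) = wpow d (p1 * k) * wpow d (-(q1 * k)) := by
          rw [← wpow_add]; congr 1; ring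
        have hd1 : (1 / (d : ℂ)) * (d : ℂ) = 1 := by
          field_simp
        linear_combination ((1 / Real.sqrt d : ℝ) : ℂ) * ((1 / Real.sqrt d : ℝ) : ℂ) *
            (1 / (d : ℂ)) * (c k (p2 - q1) : ℂ) * (d : ℂ) * hw2 +
          ((1 / Real.sqrt d : ℝ) : ℂ) * ((1 / Real.sqrt d : ℝ) : ℂ) * (c k (p2 - q1) : ℂ) *
            (wpow d (p1 * k) * wpow d (-(q1 * k))) * hd1
      · rfl
  refine (Finset.sum_congr rfl fun k _ => step k).trans ?_
  simp only [Finset.sum_ite_irrel, Finset.sum_const_zero]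
end

section
/- With the setup of the filtering construction (ρ a density matrix on ℂ^d ⊗ ℂ^d, |φ⟩ a normalized Schmidt rank 2 vector with Schmidt data a_i, b_i, P_A = |a_0⟩⟨a_0| + |a_1⟩⟨a_1|, P_B = |b_0*⟩⟨b_0*| + |b_1*⟩⟨b_1*|, q = Tr((P_A ⊗ P_B)ρ) > 0, σ = q^{−1}(P_A ⊗ P_B) ρ (P_A ⊗ P_B)): if |φ⟩ is an eigenvector of ρ^Γ with eigenvalue λ, i.e. ρ^Γ|φ⟩ = λ|φ⟩, then |φ⟩ is an eigenvector of σ^Γ with eigenvalue q^{−1}λ, i.e. σ^Γ|φ⟩ = q^{−1}λ|φ⟩. -/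
open Matrix BigOperators Complex Kronecker
open scoped ComplexOrder

/-- Rank-2 projector `|v₀⟩⟨v₀| + |v₁⟩⟨v₁|`. -/
def projPair {d : ℕ} (v : Fin 2 → ZMod d → ℂ) : Matrix (ZMod d) (ZMod d) ℂ :=
  Matrix.of fun i j => v 0 i * (starRingEnd ℂ) (v 0 j) + v 1 i * (starRingEnd ℂ) (v 1 j)

lemma projPair_fix {d : ℕ} [NeZero d] (v : Fin 2 → ZMod d → ℂ)
    (hv : ∀ i j, star (v i) ⬝ᵥ v j = if i = j then 1 else 0) (s : Fin 2) :
    projPair v *ᵥ v s = v s := by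
  funext i
  have h0 := hv 0 s; have h1 := hv 1 s
  simp only [dotProduct, Pi.star_apply, RCLike.star_def] at h0 h1
  simp only [projPair, mulVec, dotProduct, Matrix.of_apply, add_mul, Finset.sum_add_distrib,
    mul_assoc, ← Finset.mul_sum]
  rw [h0, h1]
  fin_cases s <;> simp

lemma kron_mulVec {d : ℕ} [NeZero d] (A B : Matrix (ZMod d) (ZMod d) ℂ) (u w : ZMod d → ℂ) :
    (A ⊗ₖ B) *ᵥ (fun p => u p.1 * w p.2) = fun p => (A *ᵥ u) p.1 * (B *ᵥ w) p.2 := by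
  funext p
  simp only [mulVec, dotProduct, Fintype.sum_prod_type, kroneckerMap_apply, Finset.sum_mul,
    Finset.mul_sum]
  rw [Finset.sum_comm]
  refine Finset.sum_congr rfl fun k _ => Finset.sum_congr rfl fun l _ => by ring

lemma PT_conj {d : ℕ} [NeZero d] (A B : Matrix (ZMod d) (ZMod d) ℂ)
    (M : Matrix (ZMod d × ZMod d) (ZMod d × ZMod d) ℂ) :
    PT ((A ⊗ₖ B) * M * (A ⊗ₖ B)) = (A ⊗ₖ Bᵀ) * PT M * (A ⊗ₖ Bᵀ) := by
  ext ⟨i, j⟩ ⟨k, l⟩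
  simp only [PT, Matrix.of_apply, Matrix.mul_apply, kroneckerMap_apply, transpose_apply,
    Finset.sum_mul]
  rw [← Fintype.sum_prod_type', ← Fintype.sum_prod_type']
  exact Fintype.sum_equiv
    ⟨fun x => ((x.1.1, x.2.2), (x.2.1, x.1.2)), fun x => ((x.1.1, x.2.2), (x.2.1, x.1.2)),
      fun x => rfl, fun x => rfl⟩ _ _ (fun x => by simp; ring)

lemma PT_smul {d : ℕ} (c : ℂ) (M : Matrix (ZMod d × ZMod d) (ZMod d × ZMod d) ℂ) :
    PT (c • M) = c • PT M := by
  ext p q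
  simp [PT]

/-- If `φ` is an eigenvector of `ρ^Γ` with eigenvalue `λ`, then `φ` is an eigenvector of
`σ^Γ` with eigenvalue `q⁻¹ λ`, where `σ = q⁻¹ (P_A ⊗ P_B) ρ (P_A ⊗ P_B)` is the filtered
state. -/
theorem stmt12 (d : ℕ) [NeZero d]
    (ρ : Matrix (ZMod d × ZMod d) (ZMod d × ZMod d) ℂ)
    (hρ : ρ.PosSemidef) (htr : ρ.trace = 1)
    (μ₀ μ₁ : ℝ) (a b : Fin 2 → ZMod d → ℂ)
    (hμ : μ₁ ≤ μ₀) (hμ1 : 0 < μ₁) (hnorm : μ₀ ^ 2 + μ₁ ^ 2 = 1)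
    (ha : ∀ i j, star (a i) ⬝ᵥ a j = if i = j then 1 else 0)
    (hb : ∀ i j, star (b i) ⬝ᵥ b j = if i = j then 1 else 0)
    (φ : ZMod d × ZMod d → ℂ)
    (hφ : φ = fun p => (μ₀ : ℂ) * a 0 p.1 * b 0 p.2 + (μ₁ : ℂ) * a 1 p.1 * b 1 p.2)
    (q : ℝ)
    (hq : ((projPair a ⊗ₖ projPair fun k i => (starRingEnd ℂ) (b k i)) * ρ).trace = (q : ℂ))
    (hqpos : 0 < q)
    (σ : Matrix (ZMod d × ZMod d) (ZMod d × ZMod d) ℂ)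
    (hσ : σ = ((q⁻¹ : ℝ) : ℂ) •
      ((projPair a ⊗ₖ projPair fun k i => (starRingEnd ℂ) (b k i)) * ρ *
        (projPair a ⊗ₖ projPair fun k i => (starRingEnd ℂ) (b k i))))
    (lam : ℂ) (heig : PT ρ *ᵥ φ = lam • φ) :
    PT σ *ᵥ φ = (((q⁻¹ : ℝ) : ℂ) * lam) • φ := by
  have hBt : (projPair fun k i => (starRingEnd ℂ) (b k i))ᵀ = projPair b := by
    ext i j
    simp only [projPair, transpose_apply, Matrix.of_apply, _root_.map_mul, Complex.conj_conj]
    ring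
  have hker : ∀ (c : ℂ) (s : Fin 2),
      (projPair a ⊗ₖ projPair b) *ᵥ (fun p => c * a s p.1 * b s p.2)
        = fun p => c * a s p.1 * b s p.2 := by
    intro c s
    have h1 : (fun p : ZMod d × ZMod d => c * a s p.1 * b s p.2)
        = fun p => (c • a s) p.1 * b s p.2 := by
      funext p; simp [mul_assoc]
    rw [h1, kron_mulVec, Matrix.mulVec_smul, projPair_fix a ha s, projPair_fix b hb s]
  have hKφ : (projPair a ⊗ₖ projPair b) *ᵥ φ = φ := by
    rw [hφ]
    have hsplit : (fun p : ZMod d × ZMod d =>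
        (μ₀ : ℂ) * a 0 p.1 * b 0 p.2 + (μ₁ : ℂ) * a 1 p.1 * b 1 p.2)
        = (fun p : ZMod d × ZMod d => (μ₀ : ℂ) * a 0 p.1 * b 0 p.2)
          + (fun p : ZMod d × ZMod d => (μ₁ : ℂ) * a 1 p.1 * b 1 p.2) := rfl
    rw [hsplit, Matrix.mulVec_add, hker _ 0, hker _ 1]
  have hPTσ : PT σ = ((q⁻¹ : ℝ) : ℂ) •
      ((projPair a ⊗ₖ projPair b) * PT ρ * (projPair a ⊗ₖ projPair b)) := by
    rw [hσ, PT_smul, PT_conj, hBt]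
  rw [hPTσ, Matrix.smul_mulVec, ← Matrix.mulVec_mulVec, ← Matrix.mulVec_mulVec,
    hKφ, heig, Matrix.mulVec_smul, hKφ, smul_smul]
end
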